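/- arXiv:2210.02951 — 10 statements merged into one kernel-verified Lean document; each statement's English description precedes it below -/
import Mathlib

section
/- Let R be a commutative ring and M, N be R-modules. If M ⊗[R] N is isomorphic as an R-module to R^n for some n ≥ 1, then M and N are both finitely generated projective R-modules. -/
/-!
A surjective functional `f : M ⊗ N → R` with `f ξ = 1` makes `M` a retract of `(M ⊗ N) ⊗ M`,
via `m ↦ ξ ⊗ m` and `x ⊗ m ↦ f x • m`. Since `M ⊗ N` is finitely generated, finitely many
elements of `M` already suffice to generate it, so some `F ⊗ N → M ⊗ N` with `F = R^k` is
surjective; it splits because `M ⊗ N` is projective. Tensoring the splitting with `M` makes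
`(M ⊗ N) ⊗ M`, hence `M`, a retract of `(F ⊗ N) ⊗ M ≅ F ⊗ (M ⊗ N)`, which is finite projective.
-/

open TensorProduct

theorem Module.finite_and_projective_of_retract {R M X : Type*} [Semiring R]
    [AddCommMonoid M] [Module R M] [AddCommMonoid X] [Module R X] [Module.Finite R X]
    [Module.Projective R X] (i : M →ₗ[R] X) (r : X →ₗ[R] M) (h : r ∘ₗ i = LinearMap.id) :
    Module.Finite R M ∧ Module.Projective R M :=
  ⟨.of_surjective r fun m => ⟨i m, LinearMap.congr_fun h m⟩, .of_split i r h⟩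

theorem LinearMap.exists_retract_tensor_of_surjective {R P : Type*} (M : Type*) [CommSemiring R]
    [AddCommMonoid M] [Module R M] [AddCommMonoid P] [Module R P] {f : P →ₗ[R] R}
    (hf : Function.Surjective f) :
    ∃ (i : M →ₗ[R] P ⊗[R] M) (r : P ⊗[R] M →ₗ[R] M), r ∘ₗ i = LinearMap.id := by
  obtain ⟨ξ, hξ⟩ := hf 1
  refine ⟨TensorProduct.mk R P M ξ, TensorProduct.lift (LinearMap.lsmul R M ∘ₗ f), ?_⟩
  ext m
  simp [hξ]

section

variable {R M N : Type*} [CommSemiring R] [AddCommMonoid M] [Module R M] [AddCommMonoid N]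
  [Module R N]

theorem Module.Finite.exists_fin_rTensor_surjective [Module.Finite R (M ⊗[R] N)] :
    ∃ (k : ℕ) (p : (Fin k → R) →ₗ[R] M), Function.Surjective (p.rTensor N) := by
  obtain ⟨s, hs⟩ := Module.Finite.fg_top (R := R) (M := M ⊗[R] N)
  obtain ⟨M', _, hM'⟩ := exists_finite_submodule_left_of_setFinite (s : Set (M ⊗[R] N))
    s.finite_toSet
  have hM'_surj : Function.Surjective (M'.subtype.rTensor N) := by
    rw [← LinearMap.range_eq_top, eq_top_iff, ← hs]
    exact Submodule.span_le.mpr hM'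
  obtain ⟨k, g, hg⟩ := Module.Finite.exists_fin' R M'
  refine ⟨k, M'.subtype ∘ₗ g, ?_⟩
  rw [LinearMap.rTensor_comp]
  exact hM'_surj.comp (LinearMap.rTensor_surjective N hg)

theorem Module.finite_and_projective_left_of_tensorProduct [Module.Finite R (M ⊗[R] N)]
    [Module.Projective R (M ⊗[R] N)] {f : M ⊗[R] N →ₗ[R] R} (hf : Function.Surjective f) :
    Module.Finite R M ∧ Module.Projective R M := by
  obtain ⟨k, p, hp⟩ := Module.Finite.exists_fin_rTensor_surjective (R := R) (M := M) (N := N)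
  obtain ⟨s, hs⟩ := Module.projective_lifting_property (p.rTensor N) LinearMap.id hp
  obtain ⟨i, r, hri⟩ := LinearMap.exists_retract_tensor_of_surjective M hf
  let e : ((Fin k → R) ⊗[R] N) ⊗[R] M ≃ₗ[R] (Fin k → R) ⊗[R] (M ⊗[R] N) :=
    TensorProduct.assoc R _ N M ≪≫ₗ (TensorProduct.comm R N M).lTensor _
  have := Module.Finite.equiv e.symm
  have := Module.Projective.of_equiv' e.symm
  refine Module.finite_and_projective_of_retract (s.rTensor M ∘ₗ i)
    (r ∘ₗ (p.rTensor N).rTensor M) ?_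
  rw [LinearMap.comp_assoc, ← LinearMap.comp_assoc _ _ ((p.rTensor N).rTensor M),
    ← LinearMap.rTensor_comp, hs, LinearMap.rTensor_id, LinearMap.id_comp, hri]

end

theorem stmt_0 (R M N : Type*) [CommRing R] [AddCommGroup M] [Module R M]
    [AddCommGroup N] [Module R N] (n : ℕ) (hn : 1 ≤ n)
    (e : (M ⊗[R] N) ≃ₗ[R] (Fin n → R)) :
    (Module.Finite R M ∧ Module.Projective R M) ∧
      (Module.Finite R N ∧ Module.Projective R N) := by
  let f := LinearMap.proj (R := R) (φ := fun _ : Fin n => R) ⟨0, hn⟩ ∘ₗ e.toLinearMap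
  have hf : Function.Surjective f := (LinearMap.proj_surjective (R := R) _).comp e.surjective
  let c := TensorProduct.comm R N M
  have := Module.Finite.equiv e.symm
  have := Module.Projective.of_equiv' e.symm
  have := Module.Finite.equiv c.symm
  have := Module.Projective.of_equiv' c.symm
  exact ⟨Module.finite_and_projective_left_of_tensorProduct hf,
    Module.finite_and_projective_left_of_tensorProduct (f := f ∘ₗ c.toLinearMap)
      (hf.comp c.surjective)⟩
end

section
/- The annihilator of a finitely generated projective module over a commutative ring is generated by an idempotent element. -/
/-!
Let `T` be the trace ideal of `M`, generated by the values `f x` of all linear forms `f : M → R`.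
Since `a • f x = f (a • x)`, the annihilator `A` of `M` satisfies `A * T = 0`. A dual basis of the
projective module `M` writes every `x` as `∑ fᵢ x • xᵢ`, so `T • M = M`, and Nakayama's lemma
for the finitely generated `M` yields `e ∈ A` with `e - 1 ∈ T`. Then every `a ∈ A` satisfies
`a (e - 1) = 0`, i.e. `a = a e`; for `a = e` this says that `e` is idempotent.
-/

namespace Ideal

variable {R : Type*} [CommRing R]

theorem exists_isIdempotentElem_eq_span_of_mul_eq_bot_of_sup_eq_top {I J : Ideal R}
    (hmul : I * J = ⊥) (hsup : I ⊔ J = ⊤) :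
    ∃ e : R, IsIdempotentElem e ∧ I = span {e} := by
  obtain ⟨e, he, f, hf, hef⟩ := Submodule.mem_sup.mp (hsup ▸ Submodule.mem_top (x := (1 : R)))
  have mul_e : ∀ a ∈ I, a * e = a := fun a ha => by
    have : a * f = 0 := (Submodule.eq_bot_iff _).mp hmul _ (mul_mem_mul ha hf)
    linear_combination a * hef - this
  refine ⟨e, mul_e e he, le_antisymm (fun a ha => ?_) ((span_singleton_le_iff_mem I).mpr he)⟩
  exact mem_span_singleton'.mpr ⟨a, mul_e a ha⟩

end Ideal

namespace Module

variable (R M : Type*) [CommRing R] [AddCommGroup M] [Module R M]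

def traceIdeal : Ideal R := ⨆ f : Dual R M, LinearMap.range f

theorem annihilator_mul_traceIdeal : annihilator R M * traceIdeal R M = ⊥ := by
  rw [traceIdeal, Ideal.mul_iSup, iSup_eq_bot]
  refine fun f => eq_bot_iff.mpr <| Ideal.mul_le.mpr ?_
  rintro a ha _ ⟨x, rfl⟩
  rw [Submodule.mem_bot, ← smul_eq_mul, ← map_smul, mem_annihilator.mp ha, map_zero]

theorem traceIdeal_smul_top [Projective R M] :
    traceIdeal R M • (⊤ : Submodule R M) = ⊤ := by
  obtain ⟨s, hs⟩ := projective_def'.mp ‹Projective R M›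
  refine eq_top_iff.mpr fun x _ => ?_
  rw [← show Finsupp.linearCombination R id (s x) = x from LinearMap.congr_fun hs x,
    Finsupp.linearCombination_apply]
  refine Submodule.sum_mem _ fun y _ => Submodule.smul_mem_smul ?_ trivial
  exact Ideal.mem_iSup_of_mem (Finsupp.lapply y ∘ₗ s) ⟨x, rfl⟩

theorem annihilator_sup_traceIdeal_eq_top [Module.Finite R M] [Projective R M] :
    annihilator R M ⊔ traceIdeal R M = ⊤ := by
  obtain ⟨r, hr1, hr0⟩ := Submodule.exists_sub_one_mem_and_smul_eq_zero_of_fg_of_le_smul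
    (traceIdeal R M) ⊤ Module.Finite.fg_top (traceIdeal_smul_top R M).ge
  have hr : r ∈ annihilator R M := mem_annihilator.mpr fun x => hr0 x trivial
  refine (Ideal.eq_top_iff_one _).mpr ?_
  simpa using Submodule.sub_mem _ (Submodule.mem_sup_left hr) (Submodule.mem_sup_right hr1)

end Module

theorem stmt_5 (R M : Type*) [CommRing R] [AddCommGroup M] [Module R M]
    [Module.Finite R M] [Module.Projective R M] :
    ∃ e : R, IsIdempotentElem e ∧ Module.annihilator R M = Ideal.span {e} :=
  Ideal.exists_isIdempotentElem_eq_span_of_mul_eq_bot_of_sup_eq_top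
    (Module.annihilator_mul_traceIdeal R M) (Module.annihilator_sup_traceIdeal_eq_top R M)
end

section
/- Let M be a module over a commutative ring R. Then M is a finitely generated projective R-module of constant rank 1 if and only if the canonical R-module map M ⊗[R] Hom_R(M,R) → R given by x ⊗ φ ↦ φ(x) is an isomorphism. -/
/-!
Bijectivity of `contractRight R M` says exactly that `M` is an invertible module in Mathlib's
sense (`Module.Invertible`, stated with the swapped map `contractLeft`). Invertible modules are
finite projective, stay invertible under localization, and over a local ring they are free of
rank one. Conversely, a finite projective `M` is finitely presented, so its dual commutes with
localization and `contractLeft` localizes at a maximal ideal `P` to the contraction of `M_P`,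
which is bijective once `M_P ≅ R_P`; bijectivity is local on the maximal ideals.
-/

open TensorProduct Module

theorem Module.invertible_iff_bijective_contractRight {R M : Type*} [CommSemiring R]
    [AddCommMonoid M] [Module R M] :
    Module.Invertible R M ↔ Function.Bijective (contractRight R M) := by
  have : contractRight R M =
      contractLeft R M ∘ₗ (TensorProduct.comm R M (Dual R M)).toLinearMap :=
    TensorProduct.ext' fun _ _ => rfl
  rw [this, LinearMap.coe_comp, LinearEquiv.coe_coe,
    Function.Bijective.of_comp_iff _ (TensorProduct.comm ..).bijective]
  exact ⟨fun h => h.bijective, fun h => ⟨h⟩⟩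

section

variable {R : Type*} [CommRing R] (S : Submonoid R) (A : Type*) [CommRing A] [Algebra R A]
  [IsLocalization S A] {M M' : Type*} [AddCommGroup M] [Module R M] [AddCommGroup M']
  [Module R M'] [Module A M'] [IsScalarTower R A M'] (f : M →ₗ[R] M') [IsLocalizedModule S f]

theorem IsLocalizedModule.map_contractLeft [FinitePresentation R M] :
    map S (TensorProduct.map (mapExtendScalars S f (Algebra.linearMap R A) A) f)
        (Algebra.linearMap R A) (contractLeft R M) =
      LinearMap.restrictScalars R (contractLeft A M' ∘ₗ
        (IsLocalization.moduleTensorEquiv S A (Dual A M') M').symm.toLinearMap) := by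
  apply ext S (TensorProduct.map (mapExtendScalars S f (Algebra.linearMap R A) A) f)
    (map_units (Algebra.linearMap R A))
  rw [map_comp]
  refine TensorProduct.ext' fun φ m => ?_
  simp only [IsLocalization.moduleTensorEquiv, LinearMap.comp_apply, map_tmul,
    LinearMap.restrictScalars_apply, contractLeft_apply, Algebra.linearMap_apply]
  exact (map_apply S f (Algebra.linearMap R A) φ m).symm

end

theorem Module.invertible_of_isLocalized_maximal {R M : Type*} [CommRing R] [AddCommGroup M]
    [Module R M] [FinitePresentation R M]
    (h : ∀ (P : Ideal R) [P.IsMaximal],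
      Module.Invertible (Localization.AtPrime P) (LocalizedModule P.primeCompl M)) :
    Module.Invertible R M := by
  refine ⟨bijective_of_isLocalized_maximal
    (fun P _ => Dual (Localization.AtPrime P) (LocalizedModule P.primeCompl M) ⊗[R]
      LocalizedModule P.primeCompl M)
    (fun P _ => TensorProduct.map (IsLocalizedModule.mapExtendScalars P.primeCompl
      (LocalizedModule.mkLinearMap P.primeCompl M) (Algebra.linearMap R _) _)
      (LocalizedModule.mkLinearMap P.primeCompl M))
    (fun P _ => Localization.AtPrime P) (fun P _ => Algebra.linearMap R _) _ fun P _ => ?_⟩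
  rw [IsLocalizedModule.map_contractLeft]
  exact (h P).bijective.comp (LinearEquiv.bijective _)

theorem stmt_7 (R M : Type*) [CommRing R] [AddCommGroup M] [Module R M] :
    (Module.Finite R M ∧ Module.Projective R M ∧
      ∀ (p : Ideal R) (_ : p.IsPrime),
        Nonempty (LocalizedModule p.primeCompl M ≃ₗ[Localization.AtPrime p]
          Localization.AtPrime p)) ↔
    Function.Bijective (contractRight R M) := by
  rw [← Module.invertible_iff_bijective_contractRight]
  constructor
  · rintro ⟨_, _, hloc⟩
    have := Module.finitePresentation_of_projective R M
    exact Module.invertible_of_isLocalized_maximal fun P hP =>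
      .congr (hloc P hP.isPrime).some.symm
  · intro _
    exact ⟨inferInstance, inferInstance,
      fun p _ => Module.Invertible.free_iff_linearEquiv.mp inferInstance⟩
end

section
/- Let M and N be modules over a commutative ring R such that M ⊗[R] N ≅ R as R-modules. Then N is isomorphic to the dual module Hom_R(M, R). -/
open TensorProduct

theorem stmt_8 (R M N : Type*) [CommRing R] [AddCommGroup M] [Module R M]
    [AddCommGroup N] [Module R N] (e : (M ⊗[R] N) ≃ₗ[R] R) :
    Nonempty (N ≃ₗ[R] (M →ₗ[R] R)) :=
  ⟨Module.Invertible.linearEquivDual (TensorProduct.comm R N M ≪≫ₗ e)⟩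
end

section
/- Let R be a commutative ring and M an R-module such that for every prime ideal p there exists f ∈ R \ p with the localization M_f a finitely generated R_f-module. Then M is a finitely generated R-module. -/
theorem Ideal.span_eq_top_of_forall_isMaximal_exists_notMem {R : Type*} [CommSemiring R]
    {t : Set R} (h : ∀ m : Ideal R, m.IsMaximal → ∃ f ∈ t, f ∉ m) : Ideal.span t = ⊤ := by
  by_contra hne
  obtain ⟨m, hm, hle⟩ := Ideal.exists_le_maximal _ hne
  obtain ⟨f, hft, hfm⟩ := h m hm
  exact hfm (hle (Ideal.subset_span hft))

theorem stmt_9 (R M : Type*) [CommRing R] [AddCommGroup M] [Module R M]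
    (h : ∀ (p : Ideal R) (_ : p.IsPrime), ∃ f : R, f ∉ p ∧
      Module.Finite (Localization.Away f) (LocalizedModule (Submonoid.powers f) M)) :
    Module.Finite R M := by
  let t : Set R := {f | Module.Finite (Localization.Away f) (LocalizedModule.Away f M)}
  have hspan : Ideal.span t = ⊤ := Ideal.span_eq_top_of_forall_isMaximal_exists_notMem
    fun m hm ↦ (h m hm.isPrime).imp fun _ ⟨hfm, hfin⟩ ↦ ⟨hfin, hfm⟩
  exact Module.Finite.of_localizationSpan t hspan fun g ↦ g.property
end

section
/- Let R be a commutative ring, T(R) its total ring of fractions, and let I and J be R-submodules of T(R) with at least one of them flat as an R-module. Then the canonical R-module map I ⊗[R] J → I·J sending x ⊗ y to xy is an isomorphism. -/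
/-!
A localization `A` of `R` is flat over `R`, and its multiplication `A ⊗[R] A → A` is bijective.
So if `I` (say) is flat, `I ⊗ J → I ⊗ A → A ⊗ A` is injective (flatness of `I`, then of `A`),
and composing with the multiplication of `A` shows that `I ⊗ J → A` is injective; its image is
`I * J`.
-/

open Function Module TensorProduct

namespace Submodule

section Semiring

variable {R S : Type*} [CommSemiring R] [Semiring S] [Algebra R S] {M N : Submodule R S}

theorem LinearDisjoint.of_flat_of_injective_mul' [Flat R S]
    (hS : Injective (LinearMap.mul' R S)) (hflat : Flat R M ∨ Flat R N) :
    M.LinearDisjoint N := by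
  have hincl : Injective (mapIncl M N) := by
    rcases hflat with hM | hN
    · exact Flat.tensorProduct_mapIncl_injective_of_left M N
    · exact Flat.tensorProduct_mapIncl_injective_of_right M N
  rw [linearDisjoint_iff, mulMap_eq_mul'_comp_mapIncl, LinearMap.coe_comp]
  exact hS.comp hincl

theorem LinearDisjoint.bijective_mulMap' (H : M.LinearDisjoint N) : Bijective (mulMap' M N) :=
  ⟨.of_comp (f := Submodule.subtype _) H.injective, mulMap'_surjective M N⟩

end Semiring

theorem LinearDisjoint.of_isLocalization_of_flat {R A : Type*} [CommSemiring R] [CommSemiring A]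
    [Algebra R A] (p : Submonoid R) [IsLocalization p A] {M N : Submodule R A}
    (hflat : Flat R M ∨ Flat R N) : M.LinearDisjoint N :=
  have := IsLocalization.flat A p
  .of_flat_of_injective_mul' (IsLocalization.bijective_linearMap_mul' p A).injective hflat

end Submodule

theorem stmt_10 (R : Type*) [CommRing R]
    (I J : Submodule R (FractionRing R))
    (hflat : Module.Flat R I ∨ Module.Flat R J) :
    Function.Bijective (Submodule.mulMap' I J) :=
  (Submodule.LinearDisjoint.of_isLocalization_of_flat (nonZeroDivisors R) hflat).bijective_mulMap'
end

section
/- Let I be a fractional ideal of a commutative ring R. If I is a projective R-module and contains a non-zerodivisor of R, then I is an invertible fractional ideal of R. -/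
/-!
Over a localization `K` of `R`, every `R`-linear map `f : M → K` on a submodule `M ⊆ K` satisfies
`x * f y = y * f x` (clear denominators), so if `M` contains a unit `u` of `K`, then `f` is
multiplication by `f u / u`. If `M` is projective, with splitting `s : M → (M →₀ R)`, the coordinate
functionals `x ↦ s x y` are thus multiplications by elements `q y ∈ 1 / M`, and expanding
`u = ∑ s u y • y = u * ∑ y * q y` gives `1 ∈ M * (1 / M)`.
-/

namespace Submodule

variable {R K : Type*} [CommSemiring R] [CommSemiring K] [Algebra R K]

section Localization

variable (S : Submonoid R) [IsLocalization S K]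
include S

theorem mul_linearMap_comm_of_isLocalization {M : Submodule R K} (f : M →ₗ[R] K) (x y : M) :
    (x : K) * f y = y * f x := by
  obtain ⟨r, r', d, hx, hy⟩ := IsLocalization.surj₂ S K x y
  have hM : r • y = r' • x := Subtype.ext <| by
    simp only [SetLike.val_smul, Algebra.smul_def, ← hx, ← hy]
    ring
  have hf : r • f y = r' • f x := by rw [← map_smul, hM, map_smul]
  apply (IsLocalization.map_units K d).mul_left_cancel
  calc algebraMap R K d * (x * f y) = (x * algebraMap R K d) * f y := by ring
    _ = algebraMap R K d * (y * f x) := by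
      rw [hx, ← Algebra.smul_def, hf, Algebra.smul_def, ← hy]
      ring

theorem exists_mul_eq_linearMap_of_isUnit {M : Submodule R K} (f : M →ₗ[R] K) {u : M}
    (hu : IsUnit (u : K)) : ∃ q : K, ∀ x : M, f x = q * x :=
  ⟨f u * ↑hu.unit⁻¹, fun x ↦ by
    rw [mul_right_comm, mul_comm (f u), mul_linearMap_comm_of_isLocalization S f x u,
      mul_right_comm, hu.mul_val_inv, one_mul]⟩

theorem mul_one_div_eq_one_of_projective_of_isUnit {M : Submodule R K} [Module.Projective R M]
    {u : M} (hu : IsUnit (u : K)) : M * (1 / M) = 1 := by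
  obtain ⟨s, hs⟩ := Module.projective_def.mp ‹Module.Projective R M›
  have : ∀ y : M, ∃ q : K, ∀ x : M, algebraMap R K (s x y) = q * x := fun y ↦
    exists_mul_eq_linearMap_of_isUnit S (Algebra.linearMap R K ∘ₗ Finsupp.lapply y ∘ₗ s) hu
  choose q hq using this
  have hq_mem (y : M) : q y ∈ 1 / M := mem_div_iff_forall_mul_mem.mpr fun x hx ↦
    mem_one.mpr ⟨s ⟨x, hx⟩ y, hq y ⟨x, hx⟩⟩
  have hu_sum : (u : K) = ∑ y ∈ (s u).support, algebraMap R K (s u y) * y := by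
    conv_lhs => rw [← hs u]
    simp [Finsupp.linearCombination_apply, Finsupp.sum, Algebra.smul_def]
  have hone : (1 : K) = ∑ y ∈ (s u).support, y * q y := by
    refine hu.mul_left_cancel ?_
    conv_lhs => rw [mul_one, hu_sum]
    simp only [Finset.mul_sum, hq]
    exact Finset.sum_congr rfl fun y _ ↦ by ring
  refine le_antisymm mul_one_div_le_one (one_le.mpr ?_)
  rw [hone]
  exact sum_mem fun y _ ↦ mul_mem_mul y.2 (hq_mem y)

end Localization

theorem isFractional_one_div_of_algebraMap_mem {R K : Type*} [CommRing R] [CommRing K]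
    [Algebra R K] {S : Submonoid R} {M : Submodule R K} {a : R}
    (ha : a ∈ S) (haM : algebraMap R K a ∈ M) : IsFractional S (1 / M) :=
  ⟨a, ha, fun q hq ↦ by
    rw [Algebra.smul_def, mul_comm]
    exact mem_one.mp (mem_div_iff_forall_mul_mem.mp hq _ haM)⟩

end Submodule

theorem stmt_13 (R : Type*) [CommRing R]
    (I : FractionalIdeal (nonZeroDivisors R) (FractionRing R))
    (hproj : Module.Projective R I)
    (hnzd : ∃ a : R, a ∈ nonZeroDivisors R ∧ algebraMap R (FractionRing R) a ∈ I) :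
    ∃ J : FractionalIdeal (nonZeroDivisors R) (FractionRing R), I * J = 1 := by
  obtain ⟨a, ha, haI⟩ := hnzd
  let J : FractionalIdeal (nonZeroDivisors R) (FractionRing R) :=
    ⟨1 / I, Submodule.isFractional_one_div_of_algebraMap_mem ha haI⟩
  refine ⟨J, FractionalIdeal.coeToSubmodule_inj.mp ?_⟩
  rw [FractionalIdeal.coe_mul, FractionalIdeal.coe_one]
  exact Submodule.mul_one_div_eq_one_of_projective_of_isUnit (nonZeroDivisors R)
    (u := ⟨_, haI⟩) (IsLocalization.map_units _ ⟨a, ha⟩)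
end

section
/- Every finitely generated flat module of constant rank over a commutative semi-local ring is free. -/
/-!
Pick, at every maximal ideal `P`, elements `y_P` of `M` whose images form a basis of `M_P`. Since
there are finitely many maximal ideals, the Chinese remainder theorem gives a single family `x` with
`x ≡ y_P` modulo `P • M` for every `P`, and by Nakayama's lemma the images of `x` still span each
`M_P`. A spanning family of `finrank` many vectors over a commutative ring is linearly independent
(Orzech property), so `x` is a basis after localizing at every maximal ideal, hence a basis of `M`.
-/

open Function Submodule Set

namespace Submodule

theorem span_range_eq_top_of_forall_sub_mem_smul_top {A N ι : Type*} [CommRing A]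
    [AddCommGroup N] [Module A N] [Module.Finite A N] {I : Ideal A} (hI : I ≤ Ideal.jacobson ⊥)
    {v w : ι → N} (hv : span A (range v) = ⊤) (hvw : ∀ i, w i - v i ∈ I • (⊤ : Submodule A N)) :
    span A (range w) = ⊤ := by
  refine top_unique (le_of_le_smul_of_le_jacobson_bot Module.Finite.fg_top hI ?_)
  nth_rw 1 [← hv]
  rw [span_le]
  rintro _ ⟨i, rfl⟩
  rw [← sub_sub_cancel (w i) (v i)]
  exact sub_mem (mem_sup_left (subset_span ⟨i, rfl⟩)) (mem_sup_right (hvw i))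

theorem exists_forall_sub_mem_smul_top {R M ι : Type*} [CommRing R] [AddCommGroup M]
    [Module R M] [Finite ι] {I : ι → Ideal R} (hI : Pairwise (IsCoprime on I)) (y : ι → M) :
    ∃ x : M, ∀ i, x - y i ∈ I i • (⊤ : Submodule R M) := by
  classical
  have := Fintype.ofFinite ι
  choose r hr using fun i ↦ Ideal.exists_forall_sub_mem_ideal hI (Pi.single i 1)
  refine ⟨∑ i, r i • y i, fun j ↦ ?_⟩
  have hsum : ∑ i, r i • y i - y j = ∑ i, (r i - (Pi.single i 1 : ι → R) j) • y i := by
    simp [sub_smul, Finset.sum_sub_distrib, Pi.single_apply]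
  rw [hsum]
  exact sum_mem fun i _ ↦ smul_mem_smul (hr i j) trivial

theorem apply_mem_map_algebraMap_smul_top {R M N : Type*} (A : Type*) [CommSemiring R]
    [CommSemiring A] [Algebra R A] [AddCommMonoid M] [Module R M] [AddCommMonoid N] [Module R N]
    [Module A N] [IsScalarTower R A N] (g : M →ₗ[R] N) {I : Ideal R} {m : M}
    (hm : m ∈ I • (⊤ : Submodule R M)) :
    g m ∈ I.map (algebraMap R A) • (⊤ : Submodule A N) := by
  refine smul_induction_on hm (fun r hr n _ ↦ ?_) fun m m' hm hm' ↦ ?_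
  · rw [map_smul, ← algebraMap_smul A r]
    exact smul_mem_smul (Ideal.mem_map_of_mem _ hr) trivial
  · rw [map_add]
    exact add_mem hm hm'

end Submodule

theorem IsLocalizedModule.exists_span_range_comp_eq_top {R Rₛ M Mₛ ι : Type*} [CommSemiring R]
    (S : Submonoid R) [CommSemiring Rₛ] [Algebra R Rₛ] [IsLocalization S Rₛ]
    [AddCommMonoid M] [Module R M] [AddCommMonoid Mₛ] [Module R Mₛ] [Module Rₛ Mₛ]
    [IsScalarTower R Rₛ Mₛ] (f : M →ₗ[R] Mₛ) [IsLocalizedModule S f] {v : ι → Mₛ}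
    (hv : span Rₛ (range v) = ⊤) : ∃ u : ι → M, span Rₛ (range (f ∘ u)) = ⊤ := by
  choose p hp using fun i ↦ IsLocalizedModule.surj S f (v i)
  refine ⟨fun i ↦ (p i).1, top_unique (hv ▸ span_le.mpr ?_)⟩
  rintro _ ⟨i, rfl⟩
  have h := hp i
  rw [Submonoid.smul_def, ← algebraMap_smul Rₛ,
    ← Units.smul_isUnit (IsLocalization.map_units Rₛ (p i).2), eq_comm, ← inv_smul_eq_iff] at h
  exact h ▸ smul_mem _ _ (subset_span ⟨i, rfl⟩)

theorem Module.nonempty_basis_of_span_localized_maximal {R M ι : Type*} [CommRing R]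
    [AddCommGroup M] [Module R M] [Fintype ι] (x : ι → M)
    (hcard : ∀ (P : Ideal R) [P.IsMaximal],
      finrank (Localization.AtPrime P) (LocalizedModule P.primeCompl M) = Fintype.card ι)
    (hspan : ∀ (P : Ideal R) [P.IsMaximal],
      span (Localization.AtPrime P) (range (LocalizedModule.mkLinearMap P.primeCompl M ∘ x)) = ⊤) :
    Nonempty (Basis ι R M) := by
  have hli : LinearIndependent R x :=
    LinearIndependent.of_isLocalized_maximal (fun P _ ↦ Localization.AtPrime P)
      (fun P _ ↦ LocalizedModule P.primeCompl M) (fun P _ ↦ LocalizedModule.mkLinearMap _ M) x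
      fun P _ ↦ linearIndependent_of_top_le_span_of_card_eq_finrank (hspan P).ge (hcard P).symm
  have hspanR : span R (range x) = ⊤ :=
    eq_top_of_localization_maximal (fun P _ ↦ Localization.AtPrime P)
      (fun P _ ↦ LocalizedModule P.primeCompl M) (fun P _ ↦ LocalizedModule.mkLinearMap _ M) _
      fun P _ ↦ by rw [localized'_span, ← range_comp]; exact hspan P
  exact ⟨.mk hli hspanR.ge⟩

theorem stmt_14_general (R M : Type*) [CommRing R] [AddCommGroup M] [Module R M]
    (hsl : {m : Ideal R | m.IsMaximal}.Finite)
    (d : ℕ)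
    (hrank : ∀ (p : Ideal R) (_ : p.IsPrime),
      Nonempty (LocalizedModule p.primeCompl M ≃ₗ[Localization.AtPrime p]
        (Fin d → Localization.AtPrime p))) :
    Nonempty (M ≃ₗ[R] (Fin d → R)) := by
  let basisAt (P : Ideal R) [P.IsMaximal] :
      Module.Basis (Fin d) (Localization.AtPrime P) (LocalizedModule P.primeCompl M) :=
    (Pi.basisFun _ _).map (hrank P inferInstance).some.symm
  have hy (P : Ideal R) [P.IsMaximal] : ∃ y : Fin d → M,
      span (Localization.AtPrime P) (range (LocalizedModule.mkLinearMap P.primeCompl M ∘ y)) = ⊤ :=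
    IsLocalizedModule.exists_span_range_comp_eq_top P.primeCompl _ (basisAt P).span_eq
  choose y hy using hy
  have : Finite {P : Ideal R // P.IsMaximal} := hsl.to_subtype
  choose x hx using fun j ↦ exists_forall_sub_mem_smul_top
    (fun P Q hPQ ↦ Ideal.isCoprime_iff_sup_eq.mpr
      (P.2.coprime_of_ne Q.2 (Subtype.coe_ne_coe.mpr hPQ)))
    (fun P : {P : Ideal R // P.IsMaximal} ↦ @y P.1 P.2 j)
  obtain ⟨b⟩ := Module.nonempty_basis_of_span_localized_maximal x
    (fun P _ ↦ by rw [Module.finrank_eq_card_basis (basisAt P)]) fun P hP ↦ by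
      have := Module.Finite.of_basis (basisAt P)
      refine span_range_eq_top_of_forall_sub_mem_smul_top
        (Localization.AtPrime.map_eq_maximalIdeal.trans_le (IsLocalRing.maximalIdeal_le_jacobson _))
        (hy P) fun j ↦ ?_
      simpa only [comp_apply, map_sub] using apply_mem_map_algebraMap_smul_top
        (Localization.AtPrime P) (LocalizedModule.mkLinearMap P.primeCompl M) (hx j ⟨P, hP⟩)
  exact ⟨b.equivFun⟩

theorem stmt_14 (R M : Type*) [CommRing R] [AddCommGroup M] [Module R M]
    (hsl : {m : Ideal R | m.IsMaximal}.Finite)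
    [Module.Finite R M] [Module.Flat R M] (d : ℕ)
    (hrank : ∀ (p : Ideal R) (_ : p.IsPrime),
      Nonempty (LocalizedModule p.primeCompl M ≃ₗ[Localization.AtPrime p]
        (Fin d → Localization.AtPrime p))) :
    Nonempty (M ≃ₗ[R] (Fin d → R)) :=
  stmt_14_general R M hsl d hrank
end

section
/- Every invertible fractional ideal of a commutative semi-local ring is principal, generated by a unit of the total ring of fractions. -/
/-!
An invertible submodule of `T(R)` is finitely generated, hence a fractional ideal, and over a ring
with finitely many maximal ideals invertible fractional ideals are principal (the maximal ideals
are pairwise coprime, so local generators can be glued by the Chinese remainder theorem). If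
`span {x} * J = 1`, then `1 = x * z` for some `z ∈ J`, so the generator `x` is a unit.
-/

open Submodule

open scoped nonZeroDivisors

theorem Submodule.isPrincipal_of_mul_eq_one_of_finite_maximals {R A : Type*} [CommRing R]
    [CommRing A] [Algebra R A] {S : Submonoid R} [IsLocalization S A] (hS : S ≤ R⁰)
    (hf : {m : Ideal R | m.IsMaximal}.Finite) {I J : Submodule R A} (hinv : I * J = 1) :
    I.IsPrincipal := by
  have hI : IsFractional S I :=
    FractionalIdeal.isFractional_of_fg (fg_of_isUnit (.of_mul_eq_one J hinv))
  have hJ : IsFractional S J :=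
    FractionalIdeal.isFractional_of_fg (fg_of_isUnit (.of_mul_eq_one_right I hinv))
  obtain ⟨I, rfl⟩ : ∃ I' : FractionalIdeal S A, (I' : Submodule R A) = I := ⟨⟨I, hI⟩, rfl⟩
  obtain ⟨J, rfl⟩ : ∃ J' : FractionalIdeal S A, (J' : Submodule R A) = J := ⟨⟨J, hJ⟩, rfl⟩
  exact FractionalIdeal.isPrincipal.of_finite_maximals_of_inv hS hf I J
    (FractionalIdeal.coe_ext <| by rwa [FractionalIdeal.coe_mul, FractionalIdeal.coe_one])

theorem Submodule.isUnit_of_span_singleton_mul_eq_one {R A : Type*} [CommSemiring R]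
    [CommSemiring A] [Algebra R A] {x : A} {J : Submodule R A} (h : span R {x} * J = 1) :
    IsUnit x := by
  have hone : (1 : A) ∈ span R {x} * J := h ▸ one_le.mp le_rfl
  obtain ⟨z, -, hxz⟩ := mem_span_singleton_mul.mp hone
  exact .of_mul_eq_one z hxz

theorem stmt_16 (R : Type*) [CommRing R]
    (hsl : {m : Ideal R | m.IsMaximal}.Finite)
    (I J : Submodule R (FractionRing R)) (hinv : I * J = 1) :
    ∃ x : FractionRing R, IsUnit x ∧ I = Submodule.span R {x} := by
  obtain ⟨x, rfl⟩ := (isPrincipal_of_mul_eq_one_of_finite_maximals le_rfl hsl hinv).principal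
  exact ⟨x, isUnit_of_span_singleton_mul_eq_one hinv, rfl⟩
end

section
/- Let e and e' be idempotents of a commutative ring R. Then there is an isomorphism of R-modules Re ⊕ Re' ≅ Re/Re(1−e') ⊕ Re'/Re'(1−e) ⊕ R(e + e' − 2ee'). -/
/-!
Splitting along the idempotent `e'` gives `Re ≅ Ree' ⊕ Re(1 - e')`, and symmetrically
`Re' ≅ Re'e ⊕ Re'(1 - e)`. Multiplication by `e'` maps `Re` onto `Ree'` with kernel
`Re(1 - e')`, so `Re / Re(1 - e') ≅ Ree'`, and likewise `Re' / Re'(1 - e) ≅ Re'e`. Finally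
`e + e' - 2ee' = e(1 - e') + e'(1 - e)` is a sum of orthogonal idempotents, so
`R(e + e' - 2ee') ≅ Re(1 - e') ⊕ Re'(1 - e)`. Regrouping the four summands gives the
isomorphism.
-/

theorem IsIdempotentElem.add_of_mul_eq_zero {R : Type*} [CommRing R] {a b : R}
    (ha : IsIdempotentElem a) (hb : IsIdempotentElem b) (hab : a * b = 0) :
    IsIdempotentElem (a + b) :=
  ha.add hb (by rw [mul_comm b, hab, add_zero])

theorem IsIdempotentElem.mem_span_singleton_iff {R : Type*} [CommRing R] {e x : R}
    (he : IsIdempotentElem e) : x ∈ Ideal.span {e} ↔ x * e = x := by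
  rw [Ideal.mem_span_singleton']
  constructor
  · rintro ⟨a, rfl⟩
    rw [mul_assoc, he.eq]
  · exact fun h => ⟨x, h⟩

namespace Ideal

variable {R : Type*} [CommRing R]

noncomputable def spanSingletonMulRight (x y : R) : span {x} →ₗ[R] span {x * y} :=
  (LinearMap.mulRight R y).restrict fun _ hz =>
    mem_span_singleton.mpr (mul_dvd_mul_right (mem_span_singleton.mp hz) y)

@[simp]
theorem coe_spanSingletonMulRight_apply (x y : R) (z : span {x}) :
    (spanSingletonMulRight x y z : R) = z * y :=
  rfl

theorem ker_spanSingletonMulRight {f : R} (hf : IsIdempotentElem f) (x : R) :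
    LinearMap.ker (spanSingletonMulRight x f) =
      Submodule.comap (span {x}).subtype (span {x * (1 - f)}) := by
  ext ⟨z, hz⟩
  obtain ⟨r, rfl⟩ := mem_span_singleton'.mp hz
  simp only [LinearMap.mem_ker, Submodule.mem_comap, Submodule.subtype_apply, mem_span_singleton']
  rw [← Subtype.coe_inj, coe_spanSingletonMulRight_apply, ZeroMemClass.coe_zero]
  constructor
  · intro h
    exact ⟨r, by linear_combination -h⟩
  · rintro ⟨s, hs⟩
    linear_combination -f * hs - s * x * hf.eq

theorem spanSingletonMulRight_surjective {f : R} (hf : IsIdempotentElem f) (x : R) :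
    Function.Surjective (spanSingletonMulRight x f) := by
  rintro ⟨y, hy⟩
  obtain ⟨r, rfl⟩ := mem_span_singleton'.mp hy
  refine ⟨⟨r * x * f, mem_span_singleton'.mpr ⟨r * f, by ring⟩⟩, Subtype.ext ?_⟩
  rw [coe_spanSingletonMulRight_apply]
  linear_combination r * x * hf.eq

noncomputable def quotEquivSpanSingletonMul {f : R} (hf : IsIdempotentElem f) (x : R) :
    (span {x} ⧸ Submodule.comap (span {x}).subtype (span {x * (1 - f)})) ≃ₗ[R] span {x * f} :=
  (Submodule.quotEquivOfEq _ _ (ker_spanSingletonMulRight hf x).symm).trans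
    ((spanSingletonMulRight x f).quotKerEquivOfSurjective (spanSingletonMulRight_surjective hf x))

noncomputable def spanSingletonAddEquivProd {a b : R} (ha : IsIdempotentElem a)
    (hb : IsIdempotentElem b) (hab : a * b = 0) :
    span {a + b} ≃ₗ[R] span {a} × span {b} where
  toFun z := (⟨z * a, mul_mem_left _ _ (mem_span_singleton_self a)⟩,
              ⟨z * b, mul_mem_left _ _ (mem_span_singleton_self b)⟩)
  map_add' _ _ := by ext <;> simp only [Submodule.coe_add, add_mul, Prod.fst_add, Prod.snd_add]
  map_smul' _ _ := by ext <;> simp [mul_assoc]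
  invFun p := ⟨p.1 + p.2, by
    obtain ⟨⟨u, hu⟩, ⟨v, hv⟩⟩ := p
    rw [ha.mem_span_singleton_iff] at hu
    rw [hb.mem_span_singleton_iff] at hv
    rw [(ha.add_of_mul_eq_zero hb hab).mem_span_singleton_iff]
    linear_combination (1 - b) * hu + (1 - a) * hv + (u + v) * hab⟩
  left_inv := by
    rintro ⟨z, hz⟩
    rw [(ha.add_of_mul_eq_zero hb hab).mem_span_singleton_iff] at hz
    exact Subtype.ext (by linear_combination hz)
  right_inv := by
    rintro ⟨⟨u, hu⟩, ⟨v, hv⟩⟩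
    rw [ha.mem_span_singleton_iff] at hu
    rw [hb.mem_span_singleton_iff] at hv
    ext
    · show (u + v) * a = u
      linear_combination hu - a * hv + v * hab
    · show (u + v) * b = v
      linear_combination hv - b * hu + u * hab

noncomputable def spanSingletonEquivProdMulOneSub {e f : R} (he : IsIdempotentElem e)
    (hf : IsIdempotentElem f) : span {e} ≃ₗ[R] span {e * f} × span {e * (1 - f)} :=
  (LinearEquiv.ofEq _ _ (by rw [← mul_add, add_sub_cancel, mul_one])).trans
    (spanSingletonAddEquivProd (he.mul hf) (he.mul hf.one_sub)
      (by linear_combination (-(e * e)) * hf.eq))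

end Ideal

theorem stmt_18 (R : Type*) [CommRing R] (e e' : R)
    (he : IsIdempotentElem e) (he' : IsIdempotentElem e') :
    Nonempty ((↥(Ideal.span {e}) × ↥(Ideal.span {e'})) ≃ₗ[R]
      ((↥(Ideal.span {e}) ⧸
          Submodule.comap (Ideal.span {e}).subtype (Ideal.span {e * (1 - e')})) ×
        (↥(Ideal.span {e'}) ⧸
          Submodule.comap (Ideal.span {e'}).subtype (Ideal.span {e' * (1 - e)})) ×
        ↥(Ideal.span {e + e' - 2 * (e * e')}))) := by
  have symmDiff_eq : e + e' - 2 * (e * e') = e * (1 - e') + e' * (1 - e) := by ring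
  let symmDiffEquiv : Ideal.span {e + e' - 2 * (e * e')} ≃ₗ[R]
      Ideal.span {e * (1 - e')} × Ideal.span {e' * (1 - e)} :=
    (LinearEquiv.ofEq _ _ (by rw [symmDiff_eq])).trans
      (Ideal.spanSingletonAddEquivProd (he.mul he'.one_sub) (he'.mul he.one_sub)
        (by linear_combination (-(e * (1 - e))) * he'.eq))
  exact ⟨(Ideal.spanSingletonEquivProdMulOneSub he he').prodCongr
      (Ideal.spanSingletonEquivProdMulOneSub he' he) ≪≫ₗ
    LinearEquiv.prodProdProdComm R _ _ _ _ ≪≫ₗ LinearEquiv.prodAssoc R _ _ _ ≪≫ₗ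
    (Ideal.quotEquivSpanSingletonMul he' e).symm.prodCongr
      ((Ideal.quotEquivSpanSingletonMul he e').symm.prodCongr symmDiffEquiv.symm)⟩
end
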